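/- arXiv:math/9812127 — 2 statements merged into one kernel-verified Lean document; each statement's English description precedes it below -/
import Mathlib

section
/- For every integer n ≥ 3 and every k with 0 ≤ k ≤ n, the coefficient of μ^k in the polynomial (D_n ∘ D_{n−1} ∘ ⋯ ∘ D_1)(S_n) equals the coefficient of μ^k z^0 in the Laurent polynomial det 𝓛_n; that is, the quantum relations QS^k_n coincide with the conserved quantities P^k_n of the periodic one-dimensional Toda lattice. -/
/-!
Write `x_i = X_i + μ` and let `O_k` be the continuant `O_0 = 1`, `O_1 = x_0`,
`O_{k+2} = x_{k+1} O_{k+1} + Q_k O_k`, the determinant of the leading `k × k` block of the open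
Toda matrix. Since `O_{m+1}` does not involve `X_{m+1}` and `∂O_{m+1}/∂X_m = O_m`, the operator
`D_m` maps `O_{m+1} x_{m+1} ⋯ x_{n-1}` to `O_{m+2} x_{m+2} ⋯ x_{n-1}`, so `D_0, …, D_{n-2}` turn
`S_n = O_1 x_1 ⋯ x_{n-1}` into `O_n`. The wrap-around operator `D_{n-1}` differentiates in `X_0`
and `X_{n-1}`, which deletes the first and last diagonal entries of `O_n`: the result is
`O_n + Q_{n-1} O'_{n-2}`, where `O'` is the continuant of the indices `1, …, n-2`.

On the other side, `det 𝓛_n` is affine in its first and last rows, which are rows of the open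
Toda matrix plus `-z e_{n-1}` and `Q_{n-1} z⁻¹ e_0`. Of the four resulting terms only `O_n` and
the term using both corners have `z`-degree `0`, and the latter is again `Q_{n-1} O'_{n-2}`.
-/

open MvPolynomial

/-- Index type for the variables `X_0, …, X_{n-1}` (as `some (Sum.inl i)`),
`Q_0, …, Q_{n-1}` (as `some (Sum.inr i)`) and `μ` (as `none`). -/
abbrev TodaIdx (n : ℕ) := Option (Fin n ⊕ Fin n)

/-- The polynomial ring `R = ℂ[X_1,…,X_n,Q_1,…,Q_n,μ]` (indices written `0,…,n-1`). -/
abbrev TodaR (n : ℕ) := MvPolynomial (TodaIdx n) ℂ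

/-- The variable `X_i`. -/
noncomputable def Xv {n : ℕ} (i : Fin n) : TodaR n := X (some (Sum.inl i))

/-- The variable `Q_i`. -/
noncomputable def Qv {n : ℕ} (i : Fin n) : TodaR n := X (some (Sum.inr i))

/-- The variable `μ`. -/
noncomputable def muv {n : ℕ} : TodaR n := X none

/-- Cyclic successor on indices: `i + 1` read modulo `n`. -/
def finSucc {n : ℕ} (i : Fin n) : Fin n := ⟨((i : ℕ) + 1) % n, Nat.mod_lt _ i.pos⟩

/-- The differential operator `D_i = Id + Q_i ∂²/(∂X_i ∂X_{i+1})`,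
indices read modulo `n`. -/
noncomputable def Dop {n : ℕ} (i : Fin n) (F : TodaR n) : TodaR n :=
  F + Qv i * pderiv (some (Sum.inl i)) (pderiv (some (Sum.inl (finSucc i))) F)

/-- The differential operator `δ_i = Id - Q_i ∂²/(∂X_i ∂X_{i+1})`. -/
noncomputable def dop {n : ℕ} (i : Fin n) (F : TodaR n) : TodaR n :=
  F - Qv i * pderiv (some (Sum.inl i)) (pderiv (some (Sum.inl (finSucc i))) F)

/-- The determinant `O_{[a,b]}` of the tridiagonal matrix with diagonal
`X_a+μ, …, X_b+μ`, superdiagonal `Q_a, …, Q_{b-1}` and subdiagonal entries `-1`. -/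
noncomputable def OI (n a b : ℕ) (hb : b < n) : TodaR n :=
  Matrix.det (Matrix.of fun i j : Fin (b + 1 - a) =>
    if (i : ℕ) = j then Xv ⟨a + i, by have := i.isLt; omega⟩ + muv
    else if (i : ℕ) + 1 = j then Qv ⟨a + i, by have := i.isLt; omega⟩
    else if (j : ℕ) + 1 = i then -1 else 0)

/-- The determinant `O_k` of the `k×k` tridiagonal matrix with diagonal
`X_0+μ, …, X_{k-1}+μ`, superdiagonal `Q_0, …, Q_{k-2}` and subdiagonal entries `-1`;
`O_0 = 1`. -/
noncomputable def Omat (n k : ℕ) (h : k ≤ n) : TodaR n :=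
  Matrix.det (Matrix.of fun i j : Fin k =>
    if (i : ℕ) = j then Xv ⟨i, by have := i.isLt; omega⟩ + muv
    else if (i : ℕ) + 1 = j then Qv ⟨i, by have := i.isLt; omega⟩
    else if (j : ℕ) + 1 = i then -1 else 0)

/-- `S_n = ∏ (X_i + μ)`. -/
noncomputable def Sn (n : ℕ) : TodaR n := ∏ i : Fin n, (Xv i + muv)

/-- The composite `D_{m-1} ∘ ⋯ ∘ D_1 ∘ D_0` (applied with `D_0` first). -/
noncomputable def DfoldUpTo (n m : ℕ) (h : m ≤ n) (F : TodaR n) : TodaR n :=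
  ((List.finRange m).map (Fin.castLE h)).foldl (fun acc i => Dop i acc) F

/-- The periodic Toda matrix `𝓛_n` over the Laurent polynomials in `z` with
coefficients in `R`: tridiagonal as in `Omat n n`, with corner entries
`(𝓛_n)_{0,n-1} = -z` and `(𝓛_n)_{n-1,0} = Q_{n-1} z⁻¹`. -/
noncomputable def Lmat (n : ℕ) (hn : 3 ≤ n) :
    Matrix (Fin n) (Fin n) (LaurentPolynomial (TodaR n)) :=
  Matrix.of fun i j =>
    if (i : ℕ) = 0 ∧ (j : ℕ) = n - 1 then -(LaurentPolynomial.T 1)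
    else if (i : ℕ) = n - 1 ∧ (j : ℕ) = 0 then
      LaurentPolynomial.C (Qv ⟨n - 1, by omega⟩) * LaurentPolynomial.T (-1)
    else if (i : ℕ) = j then LaurentPolynomial.C (Xv i + muv)
    else if (i : ℕ) + 1 = j then LaurentPolynomial.C (Qv i)
    else if (j : ℕ) + 1 = i then -1 else 0

section Continuant

variable {A : Type*} [CommRing A]

def continuant (d u l : ℕ → A) : ℕ → A
  | 0 => 1
  | 1 => d 0
  | k + 2 => d (k + 1) * continuant d u l (k + 1) - u k * l k * continuant d u l k

def tridiag (d u l : ℕ → A) (k : ℕ) : Matrix (Fin k) (Fin k) A :=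
  Matrix.of fun i j =>
    if (i : ℕ) = j then d i else if (i : ℕ) + 1 = j then u i else if (j : ℕ) + 1 = i then l j
    else 0

variable (d u l : ℕ → A)

theorem tridiag_apply_eq_zero {k : ℕ} {i j : Fin k}
    (h : (i : ℕ) + 1 < j ∨ (j : ℕ) + 1 < i) :
    tridiag d u l k i j = 0 := by
  simp only [tridiag, Matrix.of_apply]
  split_ifs <;> first | omega | rfl

theorem tridiag_submatrix_castSucc (k : ℕ) :
    (tridiag d u l (k + 1)).submatrix Fin.castSucc Fin.castSucc = tridiag d u l k := by
  ext i j
  simp [tridiag]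

theorem det_tridiag_submatrix_castSucc_succAbove (k : ℕ) :
    ((tridiag d u l (k + 2)).submatrix Fin.castSucc (Fin.last k).castSucc.succAbove).det =
      u k * (tridiag d u l k).det := by
  rw [Matrix.det_succ_column _ (Fin.last k), Fin.sum_univ_castSucc, Finset.sum_eq_zero, zero_add]
  · have hsub : ((tridiag d u l (k + 2)).submatrix Fin.castSucc
        (Fin.last k).castSucc.succAbove).submatrix (Fin.last k).succAbove (Fin.last k).succAbove =
        tridiag d u l k := by
      ext i j
      simp [tridiag]
    rw [hsub]
    simp [tridiag, ← two_mul]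
  · intro i _
    rw [Matrix.submatrix_apply, tridiag_apply_eq_zero _ _ _ (by simp), mul_zero, zero_mul]

theorem det_tridiag_add_two (k : ℕ) :
    (tridiag d u l (k + 2)).det =
      d (k + 1) * (tridiag d u l (k + 1)).det - u k * l k * (tridiag d u l k).det := by
  rw [Matrix.det_succ_row _ (Fin.last _), Fin.sum_univ_castSucc, Fin.sum_univ_castSucc,
    Finset.sum_eq_zero, zero_add, Fin.succAbove_last, tridiag_submatrix_castSucc,
    det_tridiag_submatrix_castSucc_succAbove]
  · have hdiag : tridiag d u l (k + 2) (Fin.last _) (Fin.last _) = d (k + 1) := by simp [tridiag]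
    have hsub : tridiag d u l (k + 2) (Fin.last _) (Fin.last k).castSucc = l k := by
      simp [tridiag, show k + 1 + 1 ≠ k by omega]
    rw [hdiag, hsub, Fin.val_castSucc, Fin.val_last, Fin.val_last,
      Odd.neg_one_pow ⟨k, by ring⟩, Even.neg_one_pow ⟨k + 1, by ring⟩]
    ring
  · intro j _
    rw [tridiag_apply_eq_zero _ _ _ (by simp), mul_zero, zero_mul]

theorem det_tridiag (k : ℕ) : (tridiag d u l k).det = continuant d u l k := by
  induction k using Nat.strong_induction_on with
  | _ k ih =>
  match k with
  | 0 => simp [continuant]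
  | 1 => simp [continuant, tridiag]
  | k + 2 => rw [det_tridiag_add_two, ih k (by omega), ih (k + 1) (by omega), continuant]

theorem Matrix.det_updateRow_single {k : ℕ} (M : Matrix (Fin (k + 1)) (Fin (k + 1)) A)
    (i j : Fin (k + 1)) :
    (M.updateRow i (Pi.single j 1)).det =
      (-1) ^ (i + j : ℕ) * (M.submatrix i.succAbove j.succAbove).det := by
  rw [← Matrix.adjugate_apply, Matrix.adjugate_fin_succ_eq_det_submatrix]

theorem det_tridiag_updateRow_single_corners (k : ℕ) :
    (((tridiag d u l (k + 2)).updateRow 0 (Pi.single (Fin.last _) 1)).updateRow (Fin.last _)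
      (Pi.single 0 1)).det =
      -continuant (fun i => d (i + 1)) (fun i => u (i + 1)) (fun i => l (i + 1)) k := by
  have hsub : (((tridiag d u l (k + 2)).updateRow 0 (Pi.single (Fin.last _) 1)).submatrix
      Fin.castSucc Fin.succ) = ((tridiag d u l (k + 2)).submatrix Fin.castSucc Fin.succ).updateRow 0
        (Pi.single (Fin.last _) 1) := by
    ext i j
    rcases eq_or_ne i 0 with rfl | hi
    · simp [Pi.single_apply, Fin.ext_iff]
    · simp [Matrix.updateRow_ne hi, Matrix.updateRow_ne (Fin.castSucc_ne_zero_iff.mpr hi)]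
  have hsub' : ((tridiag d u l (k + 2)).submatrix Fin.castSucc Fin.succ).submatrix Fin.succ
      Fin.castSucc = tridiag (fun i => d (i + 1)) (fun i => u (i + 1)) (fun i => l (i + 1)) k := by
    ext i j
    simp [tridiag]
  rw [Matrix.det_updateRow_single, Fin.succAbove_last, Fin.succAbove_zero, hsub,
    Matrix.det_updateRow_single, Fin.succAbove_last, Fin.succAbove_zero, hsub', det_tridiag,
    Fin.val_last, Fin.val_last, Fin.val_zero, Fin.val_zero, add_zero, zero_add, ← mul_assoc,
    ← pow_add, Odd.neg_one_pow ⟨k, by ring⟩, neg_one_mul]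

theorem Matrix.det_updateRow_add_smul_updateRow_add_smul {ι : Type*} [Fintype ι] [DecidableEq ι]
    (M : Matrix ι ι A) {i i' : ι} (h : i ≠ i') (a b : A) (v w : ι → A) :
    ((M.updateRow i (M i + a • v)).updateRow i' (M i' + b • w)).det =
      M.det + a * (M.updateRow i v).det + b * (M.updateRow i' w).det +
        a * b * ((M.updateRow i v).updateRow i' w).det := by
  have hrow : M.updateRow i (M i + a • v) i' = M i' := Matrix.updateRow_ne h.symm
  have hrow' : M.updateRow i' w i = M i := Matrix.updateRow_ne h
  have hfirst : (M.updateRow i (M i + a • v)).det = M.det + a * (M.updateRow i v).det := by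
    rw [Matrix.det_updateRow_add, Matrix.det_updateRow_smul, Matrix.updateRow_eq_self]
  have hsecond : ((M.updateRow i (M i + a • v)).updateRow i' w).det =
      (M.updateRow i' w).det + a * ((M.updateRow i v).updateRow i' w).det := by
    rw [Matrix.updateRow_comm _ h, ← hrow', Matrix.det_updateRow_add, Matrix.det_updateRow_smul,
      Matrix.updateRow_eq_self, Matrix.updateRow_comm _ h.symm]
  rw [← hrow, Matrix.det_updateRow_add, Matrix.det_updateRow_smul, Matrix.updateRow_eq_self,
    hfirst, hsecond]
  ring

end Continuant

section Derivation

variable {R A : Type*} [CommRing R] [CommRing A] [Algebra R A] (D : Derivation R A A)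

theorem Derivation.map_prod_eq_zero {ι : Type*} (s : Finset ι) (f : ι → A)
    (h : ∀ i ∈ s, D (f i) = 0) : D (∏ i ∈ s, f i) = 0 :=
  Finset.prod_induction f (fun x => D x = 0) (fun x y hx hy => by simp [Derivation.leibniz, hx, hy])
    D.map_one_eq_zero h

variable {d u l : ℕ → A}

theorem Derivation.map_continuant_eq_zero (hu : ∀ i, D (u i) = 0) (hl : ∀ i, D (l i) = 0)
    {k : ℕ} (hd : ∀ i < k, D (d i) = 0) :
    D (continuant d u l k) = 0 := by
  induction k using Nat.strong_induction_on with
  | _ k ih =>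
  match k with
  | 0 => exact D.map_one_eq_zero
  | 1 => exact hd 0 one_pos
  | k + 2 =>
    have h1 := ih (k + 1) (by omega) fun i hi => hd i (by omega)
    have h0 := ih k (by omega) fun i hi => hd i (by omega)
    simp [continuant, Derivation.leibniz, h0, h1, hu, hl, hd (k + 1)]

theorem Derivation.map_continuant_succ_of_last (hu : ∀ i, D (u i) = 0) (hl : ∀ i, D (l i) = 0)
    {k : ℕ} (hdk : D (d k) = 1) (hd : ∀ i < k, D (d i) = 0) :
    D (continuant d u l (k + 1)) = continuant d u l k := by
  match k with
  | 0 => simpa [continuant] using hdk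
  | k + 1 =>
    have h1 := D.map_continuant_eq_zero hu hl hd
    have h0 := D.map_continuant_eq_zero hu hl (k := k) fun i hi => hd i (by omega)
    simp [continuant, Derivation.leibniz, h0, h1, hu, hl, hdk]

theorem Derivation.map_continuant_succ_of_first (hu : ∀ i, D (u i) = 0) (hl : ∀ i, D (l i) = 0)
    {k : ℕ} (hd0 : D (d 0) = 1) (hd : ∀ i, 0 < i → i ≤ k → D (d i) = 0) :
    D (continuant d u l (k + 1)) =
      continuant (fun i => d (i + 1)) (fun i => u (i + 1)) (fun i => l (i + 1)) k := by
  induction k using Nat.strong_induction_on with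
  | _ k ih =>
  match k with
  | 0 => simpa [continuant] using hd0
  | 1 => simp [continuant, Derivation.leibniz, hd0, hd 1, hu, hl]
  | k + 2 =>
    have h1 := ih (k + 1) (by omega) fun i hi hik => hd i hi (by omega)
    have h0 := ih k (by omega) fun i hi hik => hd i hi (by omega)
    conv_rhs => rw [continuant]
    rw [continuant, map_sub, Derivation.leibniz, Derivation.leibniz, h1, h0]
    simp [Derivation.leibniz, hu, hl, hd (k + 2)]

end Derivation

section Toda

open Fin.NatCast

variable (n : ℕ) [NeZero n]

-- Indexed by `ℕ` so that continuant recursions can use them; the cast to `Fin n` is modulo `n`.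
noncomputable def todaDiag (i : ℕ) : TodaR n := Xv (i : Fin n) + muv

noncomputable def todaSup (i : ℕ) : TodaR n := Qv (i : Fin n)

variable {n}

theorem pderiv_todaDiag_self (i : ℕ) :
    pderiv (some (Sum.inl (i : Fin n))) (todaDiag n i) = 1 := by
  simp [todaDiag, Xv, muv, pderiv_X]

theorem pderiv_todaDiag_of_ne {i j : ℕ} (hi : i < n) (hj : j < n) (h : i ≠ j) :
    pderiv (some (Sum.inl (j : Fin n))) (todaDiag n i) = 0 := by
  simp [todaDiag, Xv, muv, pderiv_X, Fin.ext_iff, Fin.val_cast_of_lt hi, Fin.val_cast_of_lt hj, h]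

@[simp]
theorem pderiv_todaSup (j : Fin n) (i : ℕ) : pderiv (some (Sum.inl j)) (todaSup n i) = 0 := by
  simp [todaSup, Qv, pderiv_X]

theorem finSucc_natCast (m : ℕ) : finSucc (m : Fin n) = ((m + 1 : ℕ) : Fin n) := by
  ext
  show ((m : Fin n).val + 1) % n = ((m + 1 : ℕ) : Fin n).val
  rw [Fin.val_natCast, Fin.val_natCast, Nat.mod_add_mod]

theorem DfoldUpTo_succ {m : ℕ} (h : m + 1 ≤ n) (F : TodaR n) :
    DfoldUpTo n (m + 1) h F = Dop (m : Fin n) (DfoldUpTo n m (by omega) F) := by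
  have hlast : Fin.castLE h (Fin.last m) = (m : Fin n) :=
    Fin.ext (Fin.val_cast_of_lt (show m < n by omega)).symm
  have hinit : Fin.castLE h ∘ Fin.castSucc = Fin.castLE (show m ≤ n by omega) := rfl
  rw [DfoldUpTo, DfoldUpTo, List.finRange_succ_last, List.map_append, List.foldl_append,
    List.map_map, hinit, List.map_singleton, List.foldl_cons, List.foldl_nil, hlast]

theorem Dop_continuant_mul_prod {m : ℕ} (hm : m + 2 ≤ n) :
    Dop (m : Fin n) (continuant (todaDiag n) (todaSup n) (fun _ => -1) (m + 1) *
        ∏ i ∈ Finset.Ico (m + 1) n, todaDiag n i) =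
      continuant (todaDiag n) (todaSup n) (fun _ => -1) (m + 2) *
        ∏ i ∈ Finset.Ico (m + 2) n, todaDiag n i := by
  have hsplit : ∏ i ∈ Finset.Ico (m + 1) n, todaDiag n i =
      todaDiag n (m + 1) * ∏ i ∈ Finset.Ico (m + 2) n, todaDiag n i :=
    Finset.prod_eq_prod_Ico_succ_bot (by omega) _
  have hP₀ : pderiv (some (Sum.inl (m : Fin n)))
      (∏ i ∈ Finset.Ico (m + 2) n, todaDiag n i) = 0 :=
    Derivation.map_prod_eq_zero _ _ _ fun i hi => by
      rw [Finset.mem_Ico] at hi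
      exact pderiv_todaDiag_of_ne (by omega) (by omega) (by omega)
  have hP₁ : pderiv (some (Sum.inl ((m + 1 : ℕ) : Fin n)))
      (∏ i ∈ Finset.Ico (m + 2) n, todaDiag n i) = 0 :=
    Derivation.map_prod_eq_zero _ _ _ fun i hi => by
      rw [Finset.mem_Ico] at hi
      exact pderiv_todaDiag_of_ne (by omega) (by omega) (by omega)
  have hK₁ : pderiv (some (Sum.inl ((m + 1 : ℕ) : Fin n)))
      (continuant (todaDiag n) (todaSup n) (fun _ => -1) (m + 1)) = 0 :=
    Derivation.map_continuant_eq_zero _ (by simp) (by simp)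
      fun i hi => pderiv_todaDiag_of_ne (by omega) (by omega) (by omega)
  have hK₀ : pderiv (some (Sum.inl (m : Fin n)))
      (continuant (todaDiag n) (todaSup n) (fun _ => -1) (m + 1)) =
        continuant (todaDiag n) (todaSup n) (fun _ => -1) m :=
    Derivation.map_continuant_succ_of_last _ (by simp) (by simp) (pderiv_todaDiag_self m)
      fun i hi => pderiv_todaDiag_of_ne (by omega) (by omega) (by omega)
  rw [Dop, finSucc_natCast, hsplit, continuant, show Qv (m : Fin n) = todaSup n m from rfl]
  simp only [Derivation.leibniz, hP₀, hP₁, hK₀, hK₁, pderiv_todaDiag_self, smul_eq_mul,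
    mul_zero, mul_one, zero_add, add_zero]
  ring

theorem DfoldUpTo_Sn_eq_mul_prod {m : ℕ} (hm : m + 1 ≤ n) :
    DfoldUpTo n m (by omega) (Sn n) =
      continuant (todaDiag n) (todaSup n) (fun _ => -1) (m + 1) *
        ∏ i ∈ Finset.Ico (m + 1) n, todaDiag n i := by
  induction m with
  | zero =>
    have hSn : Sn n = ∏ i ∈ Finset.range n, todaDiag n i := by
      rw [← Fin.prod_univ_eq_prod_range, Sn]
      simp [todaDiag]
    rw [DfoldUpTo, List.finRange_zero, List.map_nil, List.foldl_nil, hSn, Finset.range_eq_Ico,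
      Finset.prod_eq_prod_Ico_succ_bot (by omega), continuant]
  | succ m ih => rw [DfoldUpTo_succ, ih (by omega), Dop_continuant_mul_prod hm]

theorem DfoldUpTo_Sn (k : ℕ) :
    DfoldUpTo (k + 2) (k + 2) le_rfl (Sn (k + 2)) =
      continuant (todaDiag (k + 2)) (todaSup (k + 2)) (fun _ => -1) (k + 2) +
        todaSup (k + 2) (k + 1) * continuant (fun i => todaDiag (k + 2) (i + 1))
          (fun i => todaSup (k + 2) (i + 1)) (fun _ => -1) k := by
  have hwrap : ((k + 1 + 1 : ℕ) : Fin (k + 2)) = ((0 : ℕ) : Fin (k + 2)) := by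
    ext
    simp
  have hfirst : pderiv (some (Sum.inl ((0 : ℕ) : Fin (k + 2))))
      (continuant (todaDiag (k + 2)) (todaSup (k + 2)) (fun _ => -1) (k + 2)) =
        continuant (fun i => todaDiag (k + 2) (i + 1)) (fun i => todaSup (k + 2) (i + 1))
          (fun _ => -1) (k + 1) :=
    Derivation.map_continuant_succ_of_first _ (by simp) (by simp) (pderiv_todaDiag_self 0)
      fun i hi hik => pderiv_todaDiag_of_ne (by omega) (by omega) (by omega)
  have hlast : pderiv (some (Sum.inl ((k + 1 : ℕ) : Fin (k + 2))))
      (continuant (fun i => todaDiag (k + 2) (i + 1)) (fun i => todaSup (k + 2) (i + 1))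
        (fun _ => -1) (k + 1)) =
        continuant (fun i => todaDiag (k + 2) (i + 1)) (fun i => todaSup (k + 2) (i + 1))
          (fun _ => -1) k :=
    Derivation.map_continuant_succ_of_last _ (by simp) (by simp) (pderiv_todaDiag_self (k + 1))
      fun i hi => pderiv_todaDiag_of_ne (by omega) (by omega) (by omega)
  rw [DfoldUpTo_succ, DfoldUpTo_Sn_eq_mul_prod (by omega), Finset.Ico_self, Finset.prod_empty,
    mul_one, Dop, finSucc_natCast, hwrap, hfirst, hlast]
  rfl

end Toda

section PeriodicToda

open LaurentPolynomial Fin.NatCast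

noncomputable def openTodaMatrix (n : ℕ) [NeZero n] : Matrix (Fin n) (Fin n) (TodaR n) :=
  tridiag (todaDiag n) (todaSup n) (fun _ => -1) n

theorem Lmat_eq_updateRow (k : ℕ) (hn : 3 ≤ k + 3) :
    Lmat (k + 3) hn =
      (((openTodaMatrix (k + 3)).map LaurentPolynomial.C).updateRow 0
        ((openTodaMatrix (k + 3)).map LaurentPolynomial.C 0 +
          (-T 1) • Pi.single (Fin.last _) 1)).updateRow (Fin.last _)
        ((openTodaMatrix (k + 3)).map LaurentPolynomial.C (Fin.last _) +
          (LaurentPolynomial.C (todaSup (k + 3) (k + 2)) * T (-1)) • Pi.single 0 1) := by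
  refine Matrix.ext fun i j => ?_
  have hj := j.isLt
  have hcorner : ∀ h, (⟨k + 3 - 1, h⟩ : Fin (k + 3)) = ((k + 2 : ℕ) : Fin (k + 3)) :=
    fun _ => Fin.ext (by
      show k + 3 - 1 = _
      rw [Fin.val_cast_of_lt (by omega : k + 2 < k + 3)]
      omega)
  rcases eq_or_ne i 0 with rfl | hi0
  · rw [Matrix.updateRow_ne (Fin.last_pos).ne, Matrix.updateRow_self]
    simp only [Lmat, Matrix.of_apply, Matrix.map_apply, openTodaMatrix, tridiag, Pi.add_apply,
      Pi.smul_apply, Pi.single_apply, smul_eq_mul, Fin.ext_iff, Fin.val_last, Fin.val_zero,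
      todaDiag, todaSup, Fin.cast_val_eq_self, hcorner]
    split_ifs <;> first | omega | (simp; done) | (simp at * <;> omega)
  rcases eq_or_ne i (Fin.last _) with rfl | hil
  · clear hi0
    rw [Matrix.updateRow_self]
    simp only [Lmat, Matrix.of_apply, Matrix.map_apply, openTodaMatrix, tridiag, Pi.add_apply,
      Pi.smul_apply, Pi.single_apply, smul_eq_mul, Fin.ext_iff, Fin.val_last, Fin.val_zero,
      todaDiag, todaSup, Fin.cast_val_eq_self, hcorner]
    split_ifs <;> first | omega | (simp; done) | simp at *
  · rw [Matrix.updateRow_ne hil, Matrix.updateRow_ne hi0]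
    rw [Ne, Fin.ext_iff] at hi0 hil
    simp only [Lmat, Matrix.of_apply, Matrix.map_apply, openTodaMatrix, tridiag, Fin.val_last,
      Fin.val_zero, todaDiag, todaSup, Fin.cast_val_eq_self, hcorner] at hi0 hil ⊢
    split_ifs <;> first | omega | simp

theorem LaurentPolynomial.coeff_zero_C_add_T_mul_C {R : Type*} [CommRing R] (a b c d q : R) :
    (C a + -T 1 * C b + C q * T (-1) * C c + -T 1 * (C q * T (-1)) * C d : R[T;T⁻¹]).coeff 0 =
      a - q * d := by
  have hboth : -T 1 * (C q * T (-1)) * C d = (C (-(q * d)) : R[T;T⁻¹]) := by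
    rw [map_neg, map_mul,
      show -T 1 * (C q * T (-1)) * C d = -(C q * C d * (T 1 * T (-1)) : R[T;T⁻¹]) by ring,
      ← T_add]
    simp
  rw [hboth, mul_comm (-T 1), mul_neg, mul_assoc]
  simp [← single_eq_C_mul_T, -map_mul, sub_eq_add_neg]

theorem Matrix.map_updateRow_single {ι A B : Type*} [DecidableEq ι] [Semiring A] [Semiring B]
    (f : A →+* B) (M : Matrix ι ι A) (i j : ι) :
    (M.map f).updateRow i (Pi.single j 1) = (M.updateRow i (Pi.single j 1)).map f := by
  rw [Matrix.map_updateRow]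
  congr
  funext
  simp [Pi.single_apply, apply_ite f]

theorem coeff_zero_det_Lmat (k : ℕ) (hn : 3 ≤ k + 3) :
    (Lmat (k + 3) hn).det.coeff 0 =
      continuant (todaDiag (k + 3)) (todaSup (k + 3)) (fun _ => -1) (k + 3) +
        todaSup (k + 3) (k + 2) * continuant (fun i => todaDiag (k + 3) (i + 1))
          (fun i => todaSup (k + 3) (i + 1)) (fun _ => -1) (k + 1) := by
  rw [Lmat_eq_updateRow, Matrix.det_updateRow_add_smul_updateRow_add_smul _ Fin.last_pos.ne,
    Matrix.map_updateRow_single, Matrix.map_updateRow_single, Matrix.map_updateRow_single]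
  simp only [← RingHom.mapMatrix_apply, ← RingHom.map_det]
  rw [LaurentPolynomial.coeff_zero_C_add_T_mul_C, openTodaMatrix, det_tridiag,
    det_tridiag_updateRow_single_corners]
  ring

end PeriodicToda

theorem QS_eq_P_general (n : ℕ) (hn : 3 ≤ n) (k : ℕ) :
    (MvPolynomial.optionEquivLeft ℂ (Fin n ⊕ Fin n) (DfoldUpTo n n le_rfl (Sn n))).coeff k =
      (MvPolynomial.optionEquivLeft ℂ (Fin n ⊕ Fin n)
        ((Matrix.det (Lmat n hn) : LaurentPolynomial (TodaR n)).coeff 0)).coeff k := by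
  obtain ⟨m, rfl⟩ : ∃ m, n = m + 3 := ⟨n - 3, by omega⟩
  have hsides : DfoldUpTo (m + 3) (m + 3) le_rfl (Sn (m + 3)) = (Lmat (m + 3) hn).det.coeff 0 :=
    (DfoldUpTo_Sn (m + 1)).trans (coeff_zero_det_Lmat m hn).symm
  rw [hsides]

/-- For every `n ≥ 3` and `0 ≤ k ≤ n`, the coefficient of `μ^k` in
`(D_n ∘ ⋯ ∘ D_1)(S_n)` equals the coefficient of `μ^k z^0` in `det 𝓛_n`:
the quantum relations `QS^k_n` coincide with the conserved quantities `P^k_n`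
of the periodic Toda lattice. -/
theorem QS_eq_P (n : ℕ) (hn : 3 ≤ n) (k : ℕ) (hk : k ≤ n) :
    (MvPolynomial.optionEquivLeft ℂ (Fin n ⊕ Fin n) (DfoldUpTo n n le_rfl (Sn n))).coeff k =
      (MvPolynomial.optionEquivLeft ℂ (Fin n ⊕ Fin n)
        ((Matrix.det (Lmat n hn) : LaurentPolynomial (TodaR n)).coeff 0)).coeff k :=
  QS_eq_P_general n hn k
end

section
/- For every integer n ≥ 2 and every k with 1 ≤ k ≤ n−1, the tridiagonal determinants satisfy the recursion O_{k+1} = D_k((X_{k+1} + μ)·O_k). -/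
open MvPolynomial

variable {R : Type*} [CommRing R]

def triM (d u : ℕ → R) (m : ℕ) : Matrix (Fin m) (Fin m) R :=
  Matrix.of fun i j =>
    if (i : ℕ) = j then d i
    else if (i : ℕ) + 1 = j then u i
    else if (j : ℕ) + 1 = i then -1 else 0

lemma triM_det_zero (d u : ℕ → R) : (triM d u 0).det = 1 := Matrix.det_fin_zero

lemma triM_det_one (d u : ℕ → R) : (triM d u 1).det = d 0 := by
  rw [Matrix.det_fin_one]; simp [triM]

lemma coe_succAbove_castSucc_last {m : ℕ} (j : Fin (m+1)) :
    (((Fin.castSucc (Fin.last m)).succAbove j : Fin (m+2)) : ℕ) =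
      if (j : ℕ) < m then (j : ℕ) else (j : ℕ) + 1 := by
  rcases lt_or_ge (j : ℕ) m with h | h
  · rw [Fin.succAbove_of_castSucc_lt]
    · simp [h]
    · simpa [Fin.lt_def] using h
  · rw [Fin.succAbove_of_le_castSucc]
    · simp [Nat.not_lt.mpr h]
    · simpa [Fin.le_def] using h

lemma triM_det_rec (d u : ℕ → R) (m : ℕ) :
    (triM d u (m + 2)).det =
      d (m + 1) * (triM d u (m + 1)).det + u m * (triM d u m).det := by
  rw [show ((m+2 : ℕ)) = (m+1) + 1 from rfl,
    Matrix.det_succ_row (triM d u (m+1+1)) (Fin.last (m+1))]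
  rw [Fin.sum_univ_castSucc, Fin.sum_univ_castSucc]
  have h0 : (∑ j : Fin m, (-1:R) ^ ((Fin.last (m+1) : ℕ) + ((j.castSucc.castSucc : Fin (m+2)) : ℕ))
      * (triM d u (m+1+1)) (Fin.last (m+1)) j.castSucc.castSucc *
      ((triM d u (m+1+1)).submatrix (Fin.last (m+1)).succAbove
        (j.castSucc.castSucc).succAbove).det) = 0 := by
    apply Finset.sum_eq_zero
    intro j _
    have hj := j.isLt
    have : (triM d u (m+1+1)) (Fin.last (m+1)) j.castSucc.castSucc = 0 := by
      simp only [triM, Matrix.of_apply, Fin.coe_castSucc, Fin.val_last]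
      rw [if_neg (by omega), if_neg (by omega), if_neg (by omega)]
    rw [this, mul_zero, zero_mul]
  rw [h0, zero_add]
  have hsub1 : ((triM d u (m+1+1)).submatrix (Fin.last (m+1)).succAbove
      (Fin.last (m+1)).succAbove) = triM d u (m+1) := by
    ext i j
    simp [triM, Fin.succAbove_last, Matrix.submatrix_apply]
  have hlastentry : (triM d u (m+1+1)) (Fin.last (m+1)) (Fin.last (m+1)) = d (m+1) := by
    simp [triM]
  have hmid : (triM d u (m+1+1)) (Fin.last (m+1)) (Fin.last m).castSucc = -1 := by
    simp only [triM, Matrix.of_apply, Fin.coe_castSucc, Fin.val_last]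
    rw [if_neg (by omega), if_neg (by omega)]
    simp
  have hminor : ((triM d u (m+1+1)).submatrix (Fin.last (m+1)).succAbove
      ((Fin.last m).castSucc).succAbove).det = u m * (triM d u m).det := by
    set B := (triM d u (m+1+1)).submatrix (Fin.last (m+1)).succAbove
      ((Fin.last m).castSucc).succAbove with hB
    rw [Matrix.det_succ_column B (Fin.last m)]
    rw [Finset.sum_eq_single (Fin.last m)]
    · have hBe : B (Fin.last m) (Fin.last m) = u m := by
        simp only [hB, Matrix.submatrix_apply, Fin.succAbove_last, triM, Matrix.of_apply]
        have h1 : ((((Fin.last m).castSucc).succAbove (Fin.last m) : Fin (m+2)) : ℕ) = m + 1 := by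
          rw [coe_succAbove_castSucc_last]; simp
        simp only [Fin.coe_castSucc, Fin.val_last, h1]
        rw [if_neg (by omega)]
        simp
      have hBsub : (B.submatrix (Fin.last m).succAbove (Fin.last m).succAbove).det
          = (triM d u m).det := by
        congr 1
        ext i j
        have hj := j.isLt
        have h2 : ((((Fin.last m).castSucc).succAbove (Fin.castSucc j) : Fin (m+2)) : ℕ)
            = (j : ℕ) := by
          rw [coe_succAbove_castSucc_last]; simp [hj]
        simp only [hB, Matrix.submatrix_apply, Fin.succAbove_last, triM, Matrix.of_apply,
          Fin.coe_castSucc, h2]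
      rw [hBe, hBsub]
      have hsign : (-1:R) ^ ((Fin.last m : ℕ) + (Fin.last m : ℕ)) = 1 := by
        simp only [Fin.val_last]
        rw [show m + m = 2 * m by ring, pow_mul, neg_one_sq, one_pow]
      rw [hsign, one_mul]
    · intro i _ hi
      have : B i (Fin.last m) = 0 := by
        simp only [hB, Matrix.submatrix_apply, Fin.succAbove_last, triM, Matrix.of_apply]
        have h1 : ((((Fin.last m).castSucc).succAbove (Fin.last m) : Fin (m+2)) : ℕ) = m + 1 := by
          rw [coe_succAbove_castSucc_last]; simp
        have hi' : (i : ℕ) < m := by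
          have h2 := i.isLt
          rcases Nat.lt_or_ge (i : ℕ) m with h | h
          · exact h
          · exact absurd (Fin.ext (by simp only [Fin.val_last]; omega)) hi
        simp only [Fin.coe_castSucc, h1]
        rw [if_neg (by omega), if_neg (by omega), if_neg (by omega)]
      rw [this, mul_zero, zero_mul]
    · intro h; exact absurd (Finset.mem_univ _) h
  rw [hsub1, hlastentry, hmid, hminor]
  have hs1 : (-1:R) ^ ((Fin.last (m+1) : ℕ) + (Fin.last (m+1) : ℕ)) = 1 := by
    simp only [Fin.val_last]
    rw [show m + 1 + (m + 1) = 2 * (m+1) by ring, pow_mul, neg_one_sq, one_pow]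
  have hs2 : (-1:R) ^ ((Fin.last (m+1) : ℕ) + ((Fin.last m).castSucc : ℕ)) = -1 := by
    simp only [Fin.val_last, Fin.coe_castSucc]
    rw [show m + 1 + m = 2 * m + 1 by ring, pow_succ, pow_mul, neg_one_sq, one_pow, one_mul]
  rw [hs1, hs2]
  ring

section TodaAux

open MvPolynomial

noncomputable def dD (n : ℕ) : ℕ → TodaR n :=
  fun i => (if h : i < n then Xv ⟨i, h⟩ else 0) + muv

noncomputable def uD (n : ℕ) : ℕ → TodaR n :=
  fun i => if h : i < n then Qv ⟨i, h⟩ else 0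

noncomputable def Ek (n k : ℕ) : TodaR n := (triM (dD n) (uD n) k).det

lemma pderiv_dD {n : ℕ} (j : Fin n) (i : ℕ) :
    pderiv (some (Sum.inl j)) (dD n i) = if i = (j : ℕ) then 1 else 0 := by
  by_cases h : i < n
  · by_cases hij : i = (j : ℕ)
    · have he : (⟨i, h⟩ : Fin n) = j := Fin.ext hij
      simp [dD, Xv, muv, dif_pos h, he, hij]
    · have hne : (some (Sum.inl (⟨i, h⟩ : Fin n)) : TodaIdx n) ≠ some (Sum.inl j) := by
        simp only [ne_eq, Option.some.injEq, Sum.inl.injEq]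
        exact fun hc => hij (congrArg Fin.val hc)
      simp [dD, Xv, muv, dif_pos h, pderiv_X_of_ne hne, hij]
  · have hij : ¬ i = (j : ℕ) := by have := j.isLt; omega
    simp [dD, muv, dif_neg h, hij]

lemma pderiv_uD {n : ℕ} (j : Fin n) (i : ℕ) :
    pderiv (some (Sum.inl j)) (uD n i) = 0 := by
  unfold uD
  split_ifs with h
  · exact pderiv_X_of_ne (by simp)
  · simp

lemma EkA {n : ℕ} : ∀ k : ℕ, ∀ j : Fin n, k ≤ (j : ℕ) →
    pderiv (some (Sum.inl j)) (Ek n k) = 0 := by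
  intro k
  induction k using Nat.strong_induction_on with
  | _ k ih =>
    match k, ih with
    | 0, _ =>
      intro j _
      show pderiv _ ((triM (dD n) (uD n) 0).det) = 0
      rw [triM_det_zero]
      exact pderiv_one
    | 1, _ =>
      intro j hj
      show pderiv _ ((triM (dD n) (uD n) 1).det) = 0
      rw [triM_det_one, pderiv_dD, if_neg (by omega)]
    | (k+2), ih =>
      intro j hj
      show pderiv _ ((triM (dD n) (uD n) (k+2)).det) = 0
      rw [triM_det_rec, map_add, pderiv_mul, pderiv_mul, pderiv_dD, pderiv_uD,
        if_neg (by omega)]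
      have h1 : pderiv (some (Sum.inl j)) (Ek n (k+1)) = 0 := ih (k+1) (by omega) j (by omega)
      have h2 : pderiv (some (Sum.inl j)) (Ek n k) = 0 := ih k (by omega) j (by omega)
      unfold Ek at h1 h2
      rw [h1, h2]
      ring

lemma EkB {n : ℕ} (k : ℕ) (h : k < n) :
    pderiv (some (Sum.inl (⟨k, h⟩ : Fin n))) (Ek n (k+1)) = Ek n k := by
  match k with
  | 0 =>
    show pderiv _ ((triM (dD n) (uD n) 1).det) = Ek n 0
    rw [triM_det_one, pderiv_dD, if_pos rfl]
    unfold Ek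
    rw [triM_det_zero]
  | (k+1) =>
    show pderiv _ ((triM (dD n) (uD n) (k+2)).det) = Ek n (k+1)
    rw [triM_det_rec, map_add, pderiv_mul, pderiv_mul, pderiv_dD, pderiv_uD, if_pos rfl]
    have h1 : pderiv (some (Sum.inl (⟨k+1, h⟩ : Fin n))) (Ek n (k+1)) = 0 :=
      EkA (k+1) _ (le_refl _)
    have h2 : pderiv (some (Sum.inl (⟨k+1, h⟩ : Fin n))) (Ek n k) = 0 :=
      EkA k _ (Nat.le_succ k)
    unfold Ek at h1 h2 ⊢
    rw [h1, h2]
    ring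

lemma Omat_eq_Ek (n k : ℕ) (h : k ≤ n) : Omat n k h = Ek n k := by
  unfold Omat Ek triM
  congr 1
  ext i j
  have hi : (i : ℕ) < n := lt_of_lt_of_le i.isLt h
  simp only [Matrix.of_apply, dD, uD, dif_pos hi]

end TodaAux

/-- For every `n ≥ 2` and `1 ≤ k ≤ n-1`, the tridiagonal determinants
satisfy `O_{k+1} = D_k((X_{k+1} + μ) O_k)` (here written with `0`-based indices, so the
operator is `Dop ⟨k-1⟩ = Id + Q_k ∂²/(∂X_k ∂X_{k+1})` in the `1`-based notation of the paper). -/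
theorem Omat_rec_D (n : ℕ) (hn : 2 ≤ n) (k : ℕ) (hk1 : 1 ≤ k) (hk : k ≤ n - 1) :
    Omat n (k + 1) (by omega) =
      Dop ⟨k - 1, by omega⟩ ((Xv ⟨k, by omega⟩ + muv) * Omat n k (by omega)) := by
  have hkn : k < n := by omega
  have hk1n : k - 1 < n := by omega
  rw [Omat_eq_Ek, Omat_eq_Ek]
  unfold Dop
  have hfs : finSucc (⟨k - 1, by omega⟩ : Fin n) = ⟨k, hkn⟩ := by
    apply Fin.ext
    show (k - 1 + 1) % n = k
    rw [show k - 1 + 1 = k by omega, Nat.mod_eq_of_lt hkn]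
  rw [hfs]
  have hd : Xv (⟨k, by omega⟩ : Fin n) + muv = dD n k := by
    unfold dD; rw [dif_pos hkn]
  have hq : Qv (⟨k - 1, by omega⟩ : Fin n) = uD n (k - 1) := by
    unfold uD; rw [dif_pos hk1n]
  rw [hd, hq]
  have hder1 : pderiv (some (Sum.inl (⟨k, hkn⟩ : Fin n))) (dD n k * Ek n k) = Ek n k := by
    rw [pderiv_mul, pderiv_dD, if_pos rfl, EkA k ⟨k, hkn⟩ (le_refl k)]
    ring
  rw [hder1]
  have hder2 : pderiv (some (Sum.inl (⟨k - 1, by omega⟩ : Fin n))) (Ek n k) = Ek n (k - 1) := by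
    have := EkB (k - 1) hk1n
    rwa [show k - 1 + 1 = k by omega] at this
  rw [hder2]
  have := triM_det_rec (dD n) (uD n) (k - 1)
  rw [show k - 1 + 2 = k + 1 by omega, show k - 1 + 1 = k by omega] at this
  exact this
end
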